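/- For the closed Jackson network with d queues and n customers, for any vector γ that is a strictly positive convex combination γ = Σ_{x∈Ω} α_x x with α_x > 0 for all x ∈ Ω and Σ_x α_x = 1 (Ω = {x ∈ ℕ^d : Σ_i x_i = n}), there exist service rates μ ∈ (0,∞)^d such that the stationary mean queue length vector equals γ: Σ_{x∈Ω} x_i π_x(μ) = γ_i for all i. -/

import Mathlib

/-!
Write `λ_j / μ_j = exp θ_j`, so that `π(μ)` is the exponential tilt `π_θ(x) ∝ exp ⟪θ, x⟫` of the
uniform distribution on `Ω`. The function `F(θ) = log Z(θ) - ⟪θ, γ⟫` is the cross entropy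
`-∑ α_x log π_θ(x)`, and its derivative in the direction `w` is `⟪E_θ[x] - γ, w⟫`. Minimise `F` on
the span `D` of the differences `x - γ`: there `F` grows at least linearly, because
`F(θ) ≥ max_x ⟪θ, x - γ⟫` and this maximum is positive for `θ ≠ 0` (its `α`-average vanishes).
Since `E_θ[x] - γ = ∑ π_θ(x) (x - γ)` lies in `D`, the minimiser is a critical point of `F` in that
direction, hence `E_θ[x] = γ`.
-/

open Real Finset Filter Topology
open scoped RealInnerProductSpace

section Coercive

variable {V ι : Type*} [NormedAddCommGroup V] [NormedSpace ℝ V] [FiniteDimensional ℝ V]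

lemma exists_pos_mul_norm_le_of_exists_pos {S : Finset ι} (hS : S.Nonempty)
    (ℓ : ι → V →L[ℝ] ℝ) (hℓ : ∀ a ≠ 0, ∃ x ∈ S, 0 < ℓ x a) :
    ∃ c > 0, ∀ a, ∃ x ∈ S, c * ‖a‖ ≤ ℓ x a := by
  rcases subsingleton_or_nontrivial V with hV | hV
  · obtain ⟨x, hx⟩ := hS
    exact ⟨1, one_pos, fun a => ⟨x, hx, by simp [Subsingleton.elim a 0]⟩⟩
  have hψ : Continuous fun u => S.sup' hS fun x => ℓ x u :=
    Continuous.finset_sup'_apply hS fun x _ => (ℓ x).continuous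
  obtain ⟨u₀, hu₀, hmin⟩ := (isCompact_sphere (0 : V) 1).exists_isMinOn
    (NormedSpace.sphere_nonempty.2 zero_le_one) hψ.continuousOn
  obtain ⟨x₀, hx₀, hx₀max⟩ := exists_mem_eq_sup' hS fun x => ℓ x u₀
  have hc : 0 < ℓ x₀ u₀ := by
    obtain ⟨x, hx, hpos⟩ := hℓ u₀ (ne_zero_of_mem_unit_sphere ⟨u₀, hu₀⟩)
    exact hx₀max ▸ hpos.trans_le (le_sup' (fun x => ℓ x u₀) hx)
  refine ⟨_, hc, fun a => ?_⟩
  rcases eq_or_ne a 0 with rfl | ha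
  · exact ⟨x₀, hx₀, by simp⟩
  have hnorm : 0 < ‖a‖ := norm_pos_iff.2 ha
  have hu : ‖a‖⁻¹ • a ∈ Metric.sphere (0 : V) 1 := by simp [norm_smul, hnorm.ne']
  obtain ⟨x, hx, hxmax⟩ := exists_mem_eq_sup' hS fun x => ℓ x (‖a‖⁻¹ • a)
  have hle : ℓ x₀ u₀ ≤ ℓ x (‖a‖⁻¹ • a) := hx₀max ▸ hxmax ▸ hmin hu
  refine ⟨x, hx, ?_⟩
  calc ℓ x₀ u₀ * ‖a‖ ≤ ℓ x (‖a‖⁻¹ • a) * ‖a‖ := by gcongr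
    _ = ℓ x a := by rw [map_smul, smul_eq_mul]; field_simp

end Coercive

noncomputable section Tilting

variable {E ι : Type*} [NormedAddCommGroup E] [InnerProductSpace ℝ E] (S : Finset ι) (v : ι → E)

def partitionFunction (θ : E) : ℝ := ∑ x ∈ S, exp ⟪θ, v x⟫

def tiltedWeight (θ : E) (x : ι) : ℝ := exp ⟪θ, v x⟫ / partitionFunction S v θ

def tiltedMean (θ : E) : E := ∑ x ∈ S, tiltedWeight S v θ x • v x

def tiltObjective (γ θ : E) : ℝ := log (partitionFunction S v θ) - ⟪θ, γ⟫

variable {S}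

lemma partitionFunction_pos (hS : S.Nonempty) (θ : E) : 0 < partitionFunction S v θ :=
  sum_pos (fun _ _ => exp_pos _) hS

lemma sum_tiltedWeight (hS : S.Nonempty) (θ : E) : ∑ x ∈ S, tiltedWeight S v θ x = 1 := by
  simp only [tiltedWeight, ← sum_div]
  exact div_self (partitionFunction_pos v hS θ).ne'

lemma inner_le_log_partitionFunction {x : ι} (hx : x ∈ S) (θ : E) :
    ⟪θ, v x⟫ ≤ log (partitionFunction S v θ) := by
  rw [le_log_iff_exp_le (partitionFunction_pos v ⟨x, hx⟩ θ)]
  exact single_le_sum (f := fun y => exp ⟪θ, v y⟫) (fun y _ => (exp_pos _).le) hx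

lemma sum_smul_sub_eq {w : ι → ℝ} (hw : ∑ x ∈ S, w x = 1) (γ : E) :
    ∑ x ∈ S, w x • (v x - γ) = ∑ x ∈ S, w x • v x - γ := by
  simp [smul_sub, sum_sub_distrib, ← sum_smul, hw]

lemma continuous_tiltObjective (hS : S.Nonempty) (γ : E) : Continuous (tiltObjective S v γ) := by
  have hZ : Continuous (partitionFunction S v) :=
    continuous_finsetSum _ fun x _ => (continuous_id.inner continuous_const).rexp
  exact (hZ.log fun θ => (partitionFunction_pos v hS θ).ne').sub
    (continuous_id.inner continuous_const)

lemma hasDerivAt_log_partitionFunction (hS : S.Nonempty) (θ w : E) :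
    HasDerivAt (fun t : ℝ => log (partitionFunction S v (θ + t • w)))
      ⟪tiltedMean S v θ, w⟫ 0 := by
  have hZ : HasDerivAt (fun t : ℝ => partitionFunction S v (θ + t • w))
      (∑ x ∈ S, exp ⟪θ, v x⟫ * ⟪w, v x⟫) 0 := by
    refine HasDerivAt.fun_sum fun x _ => ?_
    have hlin : HasDerivAt (fun t : ℝ => ⟪θ, v x⟫ + t * ⟪w, v x⟫) ⟪w, v x⟫ 0 := by
      simpa using ((hasDerivAt_id (0 : ℝ)).mul_const ⟪w, v x⟫).const_add ⟪θ, v x⟫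
    simpa [inner_add_left, inner_smul_left, mul_comm] using hlin.exp
  have hlog := hZ.log (by simpa using (partitionFunction_pos v hS θ).ne')
  simp only [zero_smul, add_zero] at hlog
  convert hlog using 1
  simp only [tiltedMean, tiltedWeight, sum_inner, inner_smul_left, sum_div]
  exact sum_congr rfl fun x _ => by simp [real_inner_comm, div_mul_eq_mul_div]

lemma tiltedMean_eq_of_forall_le (hS : S.Nonempty) {θ γ : E}
    (hmin : ∀ t : ℝ, tiltObjective S v γ θ ≤
      tiltObjective S v γ (θ + t • (tiltedMean S v θ - γ))) :
    tiltedMean S v θ = γ := by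
  set w := tiltedMean S v θ - γ
  have hderiv : HasDerivAt (fun t : ℝ => tiltObjective S v γ (θ + t • w))
      (⟪tiltedMean S v θ, w⟫ - ⟪w, γ⟫) 0 := by
    refine (hasDerivAt_log_partitionFunction v hS θ w).sub ?_
    simpa [inner_add_left, inner_smul_left] using
      ((hasDerivAt_id (0 : ℝ)).mul_const ⟪w, γ⟫).const_add ⟪θ, γ⟫
  have hlocmin : IsLocalMin (fun t : ℝ => tiltObjective S v γ (θ + t • w)) 0 :=
    Eventually.of_forall fun t => by simpa using hmin t
  have hw : ⟪w, w⟫ = 0 := by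
    rw [← hlocmin.hasDerivAt_eq_zero hderiv, real_inner_comm γ w, ← inner_sub_left]
  exact sub_eq_zero.1 (inner_self_eq_zero.1 hw)

lemma exists_inner_sub_pos_of_mem_span {α : ι → ℝ} (hα : ∀ x ∈ S, 0 < α x)
    (hα1 : ∑ x ∈ S, α x = 1) {γ : E} (hγ : ∑ x ∈ S, α x • v x = γ) {a : E}
    (ha : a ∈ Submodule.span ℝ ((fun x => v x - γ) '' S)) (ha0 : a ≠ 0) :
    ∃ x ∈ S, 0 < ⟪v x - γ, a⟫ := by
  by_contra! hle
  have hsum : ∑ x ∈ S, α x * ⟪v x - γ, a⟫ = 0 := by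
    simp_rw [← real_inner_smul_left, ← sum_inner, sum_smul_sub_eq v hα1, hγ, sub_self,
      inner_zero_left]
  have horth : ∀ x ∈ S, ⟪v x - γ, a⟫ = 0 := fun x hx =>
    (mul_eq_zero.1 ((sum_eq_zero_iff_of_nonpos fun y hy =>
      mul_nonpos_of_nonneg_of_nonpos (hα y hy).le (hle y hy)).1 hsum x hx)).resolve_left
      (hα x hx).ne'
  have hspan : Submodule.span ℝ ((fun x => v x - γ) '' S) ≤ (ℝ ∙ a)ᗮ := by
    refine Submodule.span_le.2 ?_
    rintro _ ⟨x, hx, rfl⟩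
    exact Submodule.mem_orthogonal_singleton_iff_inner_left.2 (horth x hx)
  exact ha0 (inner_self_eq_zero.1 (Submodule.mem_orthogonal_singleton_iff_inner_left.1
    (hspan ha)))

theorem exists_tiltedMean_eq {α : ι → ℝ} (hα : ∀ x ∈ S, 0 < α x) (hα1 : ∑ x ∈ S, α x = 1) :
    ∃ θ : E, tiltedMean S v θ = ∑ x ∈ S, α x • v x := by
  have hS : S.Nonempty := nonempty_of_sum_ne_zero (hα1 ▸ one_ne_zero)
  set γ := ∑ x ∈ S, α x • v x with hγ
  set D := Submodule.span ℝ ((fun x => v x - γ) '' S)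
  have : FiniteDimensional ℝ D := FiniteDimensional.span_of_finite ℝ (S.finite_toSet.image _)
  have hpos : ∀ a : D, a ≠ 0 → ∃ x ∈ S, 0 < ⟪v x - γ, (a : E)⟫ := fun a ha =>
    exists_inner_sub_pos_of_mem_span v hα hα1 hγ.symm a.2 (by simpa using ha)
  obtain ⟨c, hc, hcoer⟩ := exists_pos_mul_norm_le_of_exists_pos hS
    (fun x => (innerSL ℝ (v x - γ)).comp D.subtypeL) hpos
  have htendsto : Tendsto (fun a : D => tiltObjective S v γ a) (cocompact D) atTop := by
    refine tendsto_atTop_mono (fun a => ?_) (tendsto_norm_cocompact_atTop.const_mul_atTop hc)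
    obtain ⟨x, hx, hle⟩ := hcoer a
    have := inner_le_log_partitionFunction v hx (a : E)
    simp only [ContinuousLinearMap.comp_apply, innerSL_apply_apply, Submodule.subtypeL_apply,
      inner_sub_left] at hle
    rw [real_inner_comm (v x)] at this
    rw [tiltObjective, real_inner_comm γ]
    linarith
  obtain ⟨a₀, ha₀⟩ :=
    ((continuous_tiltObjective v hS γ).comp continuous_subtype_val).exists_forall_le htendsto
  refine ⟨a₀, tiltedMean_eq_of_forall_le v hS fun t => ?_⟩
  have hw : tiltedMean S v a₀ - γ ∈ D := by
    rw [tiltedMean, ← sum_smul_sub_eq v (sum_tiltedWeight v hS a₀)]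
    exact Submodule.sum_mem _ fun x hx =>
      D.smul_mem _ (Submodule.subset_span ⟨x, hx, rfl⟩)
  exact ha₀ ⟨_, D.add_mem a₀.2 (D.smul_mem t hw)⟩

end Tilting

lemma prod_div_mul_exp_neg_pow {ι : Type*} [Fintype ι] {lam : ι → ℝ} (hl : ∀ i, 0 < lam i)
    (θ : ι → ℝ) (k : ι → ℕ) :
    ∏ j, (lam j / (lam j * exp (-θ j))) ^ k j = exp (∑ j, θ j * k j) := by
  rw [exp_sum]
  refine prod_congr rfl fun j _ => ?_
  rw [div_mul_cancel_left₀ (hl j).ne', exp_neg, inv_inv, mul_comm, exp_nat_mul]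

theorem stmt_19_general (d n : ℕ) (lam : Fin d → ℝ) (hl : ∀ i, 0 < lam i)
    (S : Finset (Fin d → Fin (n + 1)))
    (α : (Fin d → Fin (n + 1)) → ℝ)
    (hα : ∀ x ∈ S, 0 < α x) (hα1 : ∑ x ∈ S, α x = 1)
    (γ : Fin d → ℝ) (hγ : ∀ i, γ i = ∑ x ∈ S, α x * ((x i : ℕ) : ℝ)) :
    ∃ mu : Fin d → ℝ, (∀ i, 0 < mu i) ∧
      ∀ i : Fin d,
        ∑ x ∈ S, ((x i : ℕ) : ℝ) *
            ((∏ j, (lam j / mu j) ^ (x j : ℕ)) /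
              (∑ y ∈ S, ∏ j, (lam j / mu j) ^ (y j : ℕ)))
          = γ i := by
  set v : (Fin d → Fin (n + 1)) → EuclideanSpace ℝ (Fin d) :=
    fun x => WithLp.toLp 2 fun j => ((x j : ℕ) : ℝ)
  obtain ⟨θ, hθ⟩ := exists_tiltedMean_eq v hα hα1
  refine ⟨fun j => lam j * exp (-θ j), fun j => mul_pos (hl j) (exp_pos _), fun i => ?_⟩
  have hprod : ∀ x : Fin d → Fin (n + 1),
      ∏ j, (lam j / (lam j * exp (-θ j))) ^ (x j : ℕ) = exp ⟪θ, v x⟫ := fun x => by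
    rw [prod_div_mul_exp_neg_pow hl]
    simp [v, PiLp.inner_apply, mul_comm]
  have hi := congrArg (fun m => m i) hθ
  simp only [tiltedMean, tiltedWeight, partitionFunction, WithLp.ofLp_sum, WithLp.ofLp_smul,
    Finset.sum_apply, Pi.smul_apply, smul_eq_mul, v] at hi
  simp only [hprod]
  rw [hγ, ← hi]
  exact sum_congr rfl fun x _ => mul_comm _ _

theorem stmt_19 (d n : ℕ) (hd : 1 ≤ d) (lam : Fin d → ℝ) (hl : ∀ i, 0 < lam i)
    (S : Finset (Fin d → Fin (n + 1)))
    (hS : S = Finset.univ.filter (fun x : Fin d → Fin (n + 1) => ∑ i, (x i : ℕ) = n))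
    (α : (Fin d → Fin (n + 1)) → ℝ)
    (hα : ∀ x ∈ S, 0 < α x) (hα1 : ∑ x ∈ S, α x = 1)
    (γ : Fin d → ℝ) (hγ : ∀ i, γ i = ∑ x ∈ S, α x * ((x i : ℕ) : ℝ)) :
    ∃ mu : Fin d → ℝ, (∀ i, 0 < mu i) ∧
      ∀ i : Fin d,
        ∑ x ∈ S, ((x i : ℕ) : ℝ) *
            ((∏ j, (lam j / mu j) ^ (x j : ℕ)) /
              (∑ y ∈ S, ∏ j, (lam j / mu j) ^ (y j : ℕ)))
          = γ i :=
  stmt_19_general d n lam hl S α hα hα1 γ hγ
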